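/- (Main theorem: explicit formula for the encoded vertices of 𝟙−CUT(n).) Let n ≥ 3 and 1 ≤ k ≤ 2^{n−1}. Then v^n(k) = 2^{C(n−1,2)} · (k − 1) + Σ_{j=1}^{n−2} 2^{C(j,2)} · (S^{2^j}(k) − 1), where C(a,2) = a(a−1)/2 with the convention C(1,2) = 0. -/

import Mathlib

/-- Integer encoding of a binary vector (MSB first): code(x) = Σ x_j 2^(m-j). -/
def code (x : List Bool) : ℕ := x.foldl (fun a b => 2 * a + (if b then 1 else 0)) 0

/-- m-bit binary representation (MSB first) of an integer k. -/
def decode (m k : ℕ) : List Bool := (List.range m).map (fun j => k.testBit (m - 1 - j))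

/-- Agreement-indicator map: λ(x) lists 𝟙(x_i = x_j) for pairs i < j in lex order. -/
def lam : List Bool → List Bool
  | [] => []
  | a :: t => (t.map (fun b => a == b)) ++ lam t

/-- Integer-level map λ#_n. -/
def lambdaSharp (n k : ℕ) : ℕ := code (lam (decode n k))

/-- Encoded vertices of 𝟙-CUT(n): v^n(k) = λ#_n(2^(n-1) + k - 1). -/
def v (n k : ℕ) : ℕ := lambdaSharp n (2 ^ (n - 1) + k - 1)

/-- The alternating cycle function S^N(k). -/
def altCycle (N k : ℕ) : ℕ :=
  if ((k - 1) / N) % 2 = 0 then N + 1 - (k - ((k - 1) / N) * N)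
  else k - ((k - 1) / N) * N

/-!
Write `x = 2^(n-1) + k - 1` in binary, most significant bit first. The part of `λ(x)` that
compares bit `j` (counted from the right) with the `j` bits below it reads `x mod 2^j` when
bit `j` is set and its complement `2^j - 1 - x mod 2^j` otherwise, and it carries the weight
`2^C(j,2)`. That block value is exactly `S^{2^j}(x + 1) - 1`, which only depends on `x` modulo
`2^(j+1)`, i.e. on `k`. For the leading bit, which is set, the block is `k - 1`.
-/

lemma code_foldl (t : List Bool) (a : ℕ) :
    t.foldl (fun a b => 2 * a + (if b then 1 else 0)) a = a * 2 ^ t.length + code t := by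
  induction t generalizing a with
  | nil => simp [code]
  | cons b t ih =>
    have h : code (b :: t) = (2 * 0 + (if b then 1 else 0)) * 2 ^ t.length + code t := ih _
    rw [List.foldl_cons, ih, h, List.length_cons, pow_succ]
    ring

lemma code_append (u w : List Bool) : code (u ++ w) = code u * 2 ^ w.length + code w := by
  rw [code, List.foldl_append]
  exact code_foldl w _

lemma code_cons (b : Bool) (t : List Bool) :
    code (b :: t) = (if b then 1 else 0) * 2 ^ t.length + code t := by
  rw [← List.singleton_append, code_append]
  cases b <;> rfl

lemma code_lt_two_pow_length (t : List Bool) : code t < 2 ^ t.length := by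
  induction t with
  | nil => simp [code]
  | cons b t ih =>
    rw [code_cons, List.length_cons, pow_succ]
    cases b <;> simp <;> omega

lemma code_map_not (t : List Bool) : code (t.map (!·)) = 2 ^ t.length - 1 - code t := by
  induction t with
  | nil => simp [code]
  | cons b t ih =>
    have h := code_lt_two_pow_length t
    rw [List.map_cons, code_cons, code_cons, ih, List.length_map, List.length_cons, pow_succ]
    cases b <;> simp <;> omega

lemma length_lam (t : List Bool) : (lam t).length = t.length.choose 2 := by
  induction t with
  | nil => rfl
  | cons a t ih => simp [lam, ih, Nat.choose_succ_succ]

lemma length_decode (m x : ℕ) : (decode m x).length = m := by simp [decode]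

lemma decode_succ (m x : ℕ) : decode (m + 1) x = x.testBit m :: decode m (x % 2 ^ m) := by
  rw [decode, List.range_succ_eq_map, List.map_cons, List.map_map, decode]
  simp only [Nat.add_sub_cancel, Nat.sub_zero, List.cons.injEq, true_and]
  refine List.map_congr_left fun j hj => ?_
  rw [List.mem_range] at hj
  rw [Function.comp_apply, Nat.testBit_mod_two_pow, show m - (j + 1) = m - 1 - j by omega]
  simp [show m - 1 - j < m by omega]

lemma code_decode (m x : ℕ) : code (decode m x) = x % 2 ^ m := by
  induction m generalizing x with
  | zero => simp [decode, code, Nat.mod_one]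
  | succ m ih =>
    rw [decode_succ, code_cons, length_decode, ih, Nat.mod_mod, Nat.testBit_eq_decide_div_mod_eq]
    rcases Nat.mod_two_eq_zero_or_one (x / 2 ^ m) with h | h <;>
      simp [h, Nat.mod_pow_succ, add_comm]

/-- The value of the block of `λ(decode m x)` comparing bit `j` of `x` with the bits below it. -/
def agreeBlock (x j : ℕ) : ℕ := if x.testBit j then x % 2 ^ j else 2 ^ j - 1 - x % 2 ^ j

lemma agreeBlock_zero (x : ℕ) : agreeBlock x 0 = 0 := by
  simp [agreeBlock, Nat.mod_one]

lemma agreeBlock_mod_two_pow {m j : ℕ} (x : ℕ) (hj : j < m) :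
    agreeBlock (x % 2 ^ m) j = agreeBlock x j := by
  rw [agreeBlock, agreeBlock, Nat.testBit_mod_two_pow, decide_eq_true hj, Bool.true_and,
    Nat.mod_mod_of_dvd _ (Nat.pow_dvd_pow 2 hj.le)]

lemma agreeBlock_two_pow_add {m y : ℕ} (hy : y < 2 ^ m) : agreeBlock (2 ^ m + y) m = y := by
  rw [agreeBlock, Nat.testBit_two_pow_add_eq, Nat.testBit_lt_two_pow hy, Nat.add_mod_left,
    Nat.mod_eq_of_lt hy]
  rfl

lemma lambdaSharp_succ (m x : ℕ) :
    lambdaSharp (m + 1) x = agreeBlock x m * 2 ^ m.choose 2 + lambdaSharp m (x % 2 ^ m) := by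
  rw [lambdaSharp, decode_succ, lam, code_append, length_lam, length_decode, lambdaSharp,
    agreeBlock]
  congr 1
  cases x.testBit m
  · simp [code_map_not, length_decode, code_decode]
  · simp [code_decode]

lemma lambdaSharp_eq_sum_agreeBlock (m x : ℕ) :
    lambdaSharp m x = ∑ j ∈ Finset.range m, 2 ^ j.choose 2 * agreeBlock x j := by
  induction m generalizing x with
  | zero => rfl
  | succ m ih =>
    rw [lambdaSharp_succ, ih, Finset.sum_range_succ, mul_comm, add_comm]
    congr 1
    exact Finset.sum_congr rfl fun j hj => by rw [agreeBlock_mod_two_pow x (Finset.mem_range.1 hj)]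

lemma altCycle_succ_sub_one (N x : ℕ) :
    altCycle N (x + 1) - 1 = if x / N % 2 = 1 then x % N else N - 1 - x % N := by
  have h := Nat.div_add_mod' x N
  rw [altCycle, Nat.add_sub_cancel]
  rcases N.eq_zero_or_pos with rfl | hN
  · simp
  · have := Nat.mod_lt x hN
    split <;> split <;> omega

lemma altCycle_two_pow_succ_sub_one (j x : ℕ) :
    altCycle (2 ^ j) (x + 1) - 1 = agreeBlock x j := by
  rw [altCycle_succ_sub_one, agreeBlock, Nat.testBit_eq_decide_div_mod_eq]
  simp only [decide_eq_true_eq]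

lemma lambdaSharp_eq_sum_altCycle (m x : ℕ) :
    lambdaSharp m x
      = ∑ j ∈ Finset.Icc 1 (m - 1), 2 ^ j.choose 2 * (altCycle (2 ^ j) (x + 1) - 1) := by
  simp_rw [lambdaSharp_eq_sum_agreeBlock, altCycle_two_pow_succ_sub_one]
  refine (Finset.sum_subset (fun j hj => ?_) fun j hj hj' => ?_).symm
  · simp only [Finset.mem_Icc, Finset.mem_range] at hj ⊢
    omega
  · obtain rfl : j = 0 := by simp only [Finset.mem_Icc, Finset.mem_range] at hj hj'; omega
    rw [agreeBlock_zero, mul_zero]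

theorem stmt_17_general (n : ℕ) (k : ℕ) (hk : 1 ≤ k) (hk2 : k ≤ 2 ^ (n - 1)) :
    v n k = 2 ^ Nat.choose (n - 1) 2 * (k - 1)
      + ∑ j ∈ Finset.Icc 1 (n - 2), 2 ^ Nat.choose j 2 * (altCycle (2 ^ j) k - 1) := by
  rcases n with _ | m
  · obtain rfl : k = 1 := by omega
    rfl
  rw [Nat.add_sub_cancel] at hk2
  have hk' : k - 1 < 2 ^ m := by omega
  rw [v, Nat.add_sub_cancel, show 2 ^ m + k - 1 = 2 ^ m + (k - 1) by omega, lambdaSharp_succ,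
    agreeBlock_two_pow_add hk', Nat.add_mod_left, Nat.mod_eq_of_lt hk',
    lambdaSharp_eq_sum_altCycle, Nat.sub_add_cancel hk, mul_comm, show m + 1 - 2 = m - 1 by omega]

theorem stmt_17 (n : ℕ) (hn : 3 ≤ n) (k : ℕ) (hk : 1 ≤ k) (hk2 : k ≤ 2 ^ (n - 1)) :
    v n k = 2 ^ Nat.choose (n - 1) 2 * (k - 1)
      + ∑ j ∈ Finset.Icc 1 (n - 2), 2 ^ Nat.choose j 2 * (altCycle (2 ^ j) k - 1) :=
  stmt_17_general n k hk hk2
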